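/- arXiv:2003.02165 — 2 statements merged into one kernel-verified Lean document; each statement's English description precedes it below -/
import Mathlib

section
/- Let d ≥ 2 and f : [0,4] → (-∞,∞] be finite, non-increasing, and convex on (0,4] with lim_{t→0⁺} f(t) = f(0). Let ω = {v_0,...,v_d} ⊂ S^{d-1} be affinely independent with the origin in the interior of conv(ω). Then min_{x ∈ S^{d-1}} ∑_{i=0}^d f(|x - v_i|²) ≤ f(0) + d·f(2 + 2/d). If f is strictly convex on (0,4] and ω is not the vertex set of a regular d-simplex inscribed in S^{d-1}, the inequality is strict. -/
/-!
Write `0 = ∑ wᵢ vᵢ` with barycentric weights and pick a vertex `v k` with `w k ≥ 1/(d+1)`.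
The other `d` vertices lie on an affine hyperplane `⟪u, ·⟫ = -h` with `‖u‖ = 1` and `h ≥ 0`.
At `u` the squared distance to `v k` is `α = 2 - 2⟪u, v k⟫` and to every other vertex it is
`β = 2 + 2h`; the balance `w k ⟪u, v k⟫ = (1 - w k) h` forces `α + d β ≥ 2d + 2 = d τ` with
`τ = 2 + 2/d`. Extended by its limit at `0`, `f` is convex and antitone on `[0, 4]`, and comparing
with the chord from `0` to `τ` gives `f α + d f β ≤ f 0 + d f τ`.
For strictly convex `f` equality forces `α = 0`, `β = τ` and `w k = 1/(d+1)`. Then all weights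
equal `1/(d+1)`, so every vertex is such an equality case, which makes the simplex regular.
-/

open Set Filter Topology Module
open scoped RealInnerProductSpace

section RealFunctions

variable {g : ℝ → ℝ} {a b : ℝ}

lemma AntitoneOn.Icc_of_tendsto_nhdsGT {β : Type*} [Preorder β] [TopologicalSpace β]
    [ClosedIciTopology β] {g : ℝ → β} (hg : AntitoneOn g (Ioc a b))
    (hlim : Tendsto g (𝓝[>] a) (𝓝 (g a))) : AntitoneOn g (Icc a b) := by
  have hle : ∀ y ∈ Ioc a b, g y ≤ g a := fun y hy => by
    refine ge_of_tendsto hlim ?_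
    filter_upwards [Ioc_mem_nhdsGT hy.1] with x hx
    exact hg ⟨hx.1, hx.2.trans hy.2⟩ hy hx.2
  intro x hx y hy hxy
  rcases hx.1.eq_or_lt with rfl | hxa
  · rcases hy.1.eq_or_lt with rfl | hya
    · exact le_rfl
    · exact hle y ⟨hya, hy.2⟩
  · exact hg ⟨hxa, hx.2⟩ ⟨hxa.trans_le hxy, hy.2⟩ hxy

lemma ConvexOn.Icc_of_tendsto_nhdsGT (hg : ConvexOn ℝ (Ioc a b) g)
    (hlim : Tendsto g (𝓝[>] a) (𝓝 (g a))) : ConvexOn ℝ (Icc a b) g := by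
  have key : ∀ y ∈ Ioc a b, ∀ p q : ℝ, 0 < p → 0 < q → p + q = 1 →
      g (p * a + q * y) ≤ p * g a + q * g y := by
    intro y hy p q hp hq hpq
    have hz : p * a + q * y ∈ Ioo a b := by
      obtain rfl : p = 1 - q := by linarith
      constructor <;> nlinarith [hy.1, hy.2]
    have hcont : ContinuousAt g (p * a + q * y) :=
      (hg.continuousOn_interior.mono (by rw [interior_Ioc])).continuousAt
        (Ioo_mem_nhds hz.1 hz.2)
    have hpath : Tendsto (fun ε => p * ε + q * y) (𝓝[>] a) (𝓝 (p * a + q * y)) :=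
      ((continuous_const.mul continuous_id).add continuous_const).continuousAt.tendsto.mono_left
        nhdsWithin_le_nhds
    refine le_of_tendsto_of_tendsto (hcont.tendsto.comp hpath)
      ((hlim.const_mul p).add_const (q * g y)) ?_
    filter_upwards [Ioo_mem_nhdsGT hy.1] with ε hε
    simpa using hg.2 ⟨hε.1, hε.2.le.trans hy.2⟩ hy hp.le hq.le hpq
  refine ⟨convex_Icc a b, fun x hx y hy p q hp hq hpq => ?_⟩
  simp only [smul_eq_mul]
  rcases hp.eq_or_lt with rfl | hp
  · simp_all
  rcases hq.eq_or_lt with rfl | hq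
  · simp_all
  rcases hx.1.eq_or_lt with rfl | hxa <;> rcases hy.1.eq_or_lt with rfl | hya
  · rw [← add_mul, hpq, one_mul, ← add_mul, hpq, one_mul]
  · exact key y ⟨hya, hy.2⟩ p q hp hq hpq
  · rw [add_comm, add_comm (p * g x)]
    exact key x ⟨hxa, hx.2⟩ q p hq hp (by linarith)
  · exact hg.2 ⟨hxa, hx.2⟩ ⟨hya, hy.2⟩ hp.le hq.le hpq

lemma StrictConvexOn.of_convexOn_of_openSegment_subset {E : Type*} [AddCommGroup E]
    [Module ℝ E] {s t : Set E} {g : E → ℝ} (hs : ConvexOn ℝ s g) (ht : StrictConvexOn ℝ t g)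
    (hst : ∀ x ∈ s, ∀ y ∈ s, x ≠ y → openSegment ℝ x y ⊆ t) : StrictConvexOn ℝ s g := by
  refine ⟨hs.1, fun x hx y hy hxy p q hp hq hpq => ?_⟩
  obtain rfl : q = 1 - p := by linarith
  -- `p • x + (1 - p) • y` is also the `(p, 1 - p)`-combination of two distinct points
  -- strictly inside `[x, y]`, at which strict convexity is available.
  set x' := ((1 + p) / 2) • x + ((1 - p) / 2) • y
  set y' := (p / 2) • x + ((2 - p) / 2) • y
  have hx' : x' ∈ t := hst x hx y hy hxy
    ⟨(1 + p) / 2, (1 - p) / 2, by linarith, by linarith, by ring, rfl⟩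
  have hy' : y' ∈ t := hst x hx y hy hxy
    ⟨p / 2, (2 - p) / 2, by linarith, by linarith, by ring, rfl⟩
  have hne : x' ≠ y' := by
    intro h
    apply hxy
    have : (1 / 2 : ℝ) • (x - y) = 0 := by rw [← sub_eq_zero.2 h]; module
    simpa [sub_eq_zero] using this
  have hm : p • x' + (1 - p) • y' = p • x + (1 - p) • y := by module
  have h1 := ht.2 hx' hy' hne hp hq (by ring)
  have h2 := hs.2 hx hy (by linarith : (0:ℝ) ≤ (1 + p) / 2) (by linarith : (0:ℝ) ≤ (1 - p) / 2)
    (by ring)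
  have h3 := hs.2 hx hy (by linarith : (0:ℝ) ≤ p / 2) (by linarith : (0:ℝ) ≤ (2 - p) / 2)
    (by ring)
  rw [hm] at h1
  simp only [smul_eq_mul] at h1 h2 h3 ⊢
  nlinarith [mul_le_mul_of_nonneg_left h2 hp.le, mul_le_mul_of_nonneg_left h3 hq.le]

lemma StrictConvexOn.Icc_of_tendsto_nhdsGT (hg : StrictConvexOn ℝ (Ioc a b) g)
    (hlim : Tendsto g (𝓝[>] a) (𝓝 (g a))) : StrictConvexOn ℝ (Icc a b) g := by
  refine StrictConvexOn.of_convexOn_of_openSegment_subset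
    (hg.convexOn.Icc_of_tendsto_nhdsGT hlim) hg fun x hx y hy hxy => ?_
  rw [openSegment_eq_Ioo' hxy]
  exact fun z hz => ⟨(le_min hx.1 hy.1).trans_lt hz.1, hz.2.le.trans (max_le hx.2 hy.2)⟩

lemma StrictConvexOn.strictAntiOn_of_antitoneOn {s : Set ℝ} (hg : StrictConvexOn ℝ s g)
    (hanti : AntitoneOn g s) : StrictAntiOn g s := by
  intro x hx y hy hxy
  have hmid : (1 / 2 : ℝ) • x + (1 / 2 : ℝ) • y ∈ s :=
    hg.1 hx hy (by norm_num) (by norm_num) (by norm_num)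
  have h1 := hg.2 hx hy hxy.ne (by norm_num : (0:ℝ) < 1 / 2) (by norm_num : (0:ℝ) < 1 / 2)
    (by norm_num)
  have h2 := hanti hmid hy (by simp only [smul_eq_mul]; linarith)
  simp only [smul_eq_mul] at h1 h2
  linarith

variable {τ x : ℝ}

lemma ConvexOn.mul_sub_le_mul_sub (hg : ConvexOn ℝ (Icc 0 b) g) (hτ : τ ∈ Ioc 0 b)
    (hx : x ∈ Icc 0 τ) : τ * (g x - g 0) ≤ x * (g τ - g 0) := by
  rcases hx.1.eq_or_lt with rfl | hx0
  · simp
  have := hg.secant_mono (left_mem_Icc.2 (hτ.1.le.trans hτ.2)) ⟨hx0.le, hx.2.trans hτ.2⟩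
    ⟨hτ.1.le, hτ.2⟩ hx0.ne' hτ.1.ne' hx.2
  rw [sub_zero, sub_zero, div_le_div_iff₀ hx0 hτ.1] at this
  linarith

lemma StrictConvexOn.mul_sub_lt_mul_sub (hg : StrictConvexOn ℝ (Icc 0 b) g) (hτ : τ ∈ Ioc 0 b)
    (hx : x ∈ Ioo 0 τ) : τ * (g x - g 0) < x * (g τ - g 0) := by
  have := hg.secant_strict_mono (left_mem_Icc.2 (hτ.1.le.trans hτ.2))
    ⟨hx.1.le, hx.2.le.trans hτ.2⟩ ⟨hτ.1.le, hτ.2⟩ hx.1.ne' hτ.1.ne' hx.2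
  rw [sub_zero, sub_zero, div_lt_div_iff₀ hx.1 hτ.1] at this
  linarith

variable {α β n : ℝ}

lemma ConvexOn.add_mul_le_add_mul (hg : ConvexOn ℝ (Icc 0 b) g) (hanti : AntitoneOn g (Icc 0 b))
    (hτ : τ ∈ Ioc 0 b) (hα : α ∈ Icc 0 τ) (hβ : β ∈ Icc 0 b) (hn : 0 ≤ n)
    (hsum : n * τ ≤ α + n * β) : g α + n * g β ≤ g 0 + n * g τ := by
  have hτ' : τ ∈ Icc 0 b := ⟨hτ.1.le, hτ.2⟩
  have hα' : α ∈ Icc 0 b := ⟨hα.1, hα.2.trans hτ.2⟩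
  have h0 : (0 : ℝ) ∈ Icc 0 b := left_mem_Icc.2 (hτ'.1.trans hτ.2)
  have hgα : g α ≤ g 0 := hanti h0 hα' hα.1
  rcases le_or_gt τ β with hτβ | hβτ
  · nlinarith [hanti hτ' hβ hτβ]
  · have hslope : g τ ≤ g 0 := hanti h0 hτ' hτ.1.le
    have hchα := hg.mul_sub_le_mul_sub hτ hα
    have hchβ := hg.mul_sub_le_mul_sub hτ ⟨hβ.1, hβτ.le⟩
    -- add the chord bounds at `α` and `β`; the slope `g τ - g 0` is nonpositive
    refine le_of_mul_le_mul_left ?_ hτ.1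
    nlinarith [mul_le_mul_of_nonneg_left hchβ hn,
      mul_nonneg (sub_nonneg.2 hsum) (sub_nonneg.2 hslope)]

lemma StrictConvexOn.add_mul_lt_add_mul (hg : StrictConvexOn ℝ (Icc 0 b) g)
    (hanti : AntitoneOn g (Icc 0 b)) (hτ : τ ∈ Ioc 0 b) (hα : α ∈ Icc 0 τ) (hβ : β ∈ Ioc 0 b)
    (hn : 0 < n) (hsum : n * τ ≤ α + n * β) (hne : α ≠ 0 ∨ β ≠ τ) :
    g α + n * g β < g 0 + n * g τ := by
  have hτ' : τ ∈ Icc 0 b := ⟨hτ.1.le, hτ.2⟩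
  have h0 : (0 : ℝ) ∈ Icc 0 b := left_mem_Icc.2 (hτ'.1.trans hτ.2)
  have hα' : α ∈ Icc 0 b := ⟨hα.1, hα.2.trans hτ.2⟩
  have hβ' : β ∈ Icc 0 b := ⟨hβ.1.le, hβ.2⟩
  have hstrict := hg.strictAntiOn_of_antitoneOn hanti
  have hgα : g α ≤ g 0 := hanti h0 hα' hα.1
  rcases lt_trichotomy β τ with hβτ | rfl | hτβ
  · have hslope : g τ ≤ g 0 := hanti h0 hτ' hτ.1.le
    have hchα := hg.convexOn.mul_sub_le_mul_sub hτ hα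
    have hchβ := hg.mul_sub_lt_mul_sub hτ ⟨hβ.1, hβτ⟩
    refine lt_of_mul_lt_mul_left ?_ hτ.1.le
    nlinarith [mul_lt_mul_of_pos_left hchβ hn,
      mul_nonneg (sub_nonneg.2 hsum) (sub_nonneg.2 hslope)]
  · have hα0 : 0 < α := hα.1.lt_of_ne' (hne.resolve_right (not_not.2 rfl))
    linarith [hstrict h0 hα' hα0]
  · nlinarith [hstrict hτ' hβ' hτβ]

end RealFunctions

lemma EReal.coe_finset_sum {ι : Type*} (s : Finset ι) (r : ι → ℝ) :
    ((∑ i ∈ s, r i : ℝ) : EReal) = ∑ i ∈ s, (r i : EReal) :=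
  map_sum (⟨⟨(↑), EReal.coe_zero⟩, EReal.coe_add⟩ : ℝ →+ EReal) r s

lemma EReal.sum_eq_coe_sum_toReal {ι : Type*} {s : Finset ι} {x : ι → EReal}
    (h : ∀ i ∈ s, x i ≠ ⊤ ∧ x i ≠ ⊥) : ∑ i ∈ s, x i = ((∑ i ∈ s, (x i).toReal : ℝ) : EReal) := by
  rw [EReal.coe_finset_sum]
  exact Finset.sum_congr rfl fun i hi => (EReal.coe_toReal (h i hi).1 (h i hi).2).symm

lemma iInf_sphere_le {E α : Type*} [NormedAddCommGroup E] [CompleteLattice α] (F : E → α)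
    {u : E} (hu : ‖u‖ = 1) :
    ⨅ y : Metric.sphere (0 : E) 1, F y ≤ F u :=
  iInf_le (fun y : Metric.sphere (0 : E) 1 => F y) ⟨u, mem_sphere_zero_iff_norm.2 hu⟩

lemma exists_mem_stdSimplex_of_mem_convexHull_range {E ι : Type*} [AddCommGroup E] [Module ℝ E]
    [Fintype ι] {v : ι → E} {x : E} (hx : x ∈ convexHull ℝ (range v)) :
    ∃ w ∈ stdSimplex ℝ ι, ∑ i, w i • v i = x := by
  classical
  have hrange : range v = Fintype.linearCombination ℝ v '' range fun i => Pi.single i 1 := by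
    rw [← range_comp]
    congr 1
    ext i
    simp [Fintype.linearCombination_apply, Pi.single_apply]
  rw [hrange, ← LinearMap.image_convexHull, convexHull_rangle_single_eq_stdSimplex] at hx
  simpa [Fintype.linearCombination_apply] using hx

lemma exists_inv_card_le {ι : Type*} [Fintype ι] [Nonempty ι] {w : ι → ℝ} (hw : ∑ i, w i = 1) :
    ∃ i, (Fintype.card ι : ℝ)⁻¹ ≤ w i := by
  obtain ⟨i, -, hi⟩ := Finset.exists_le_of_sum_le Finset.univ_nonempty
    (f := fun _ => (Fintype.card ι : ℝ)⁻¹) (g := w) (by simp [hw])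
  exact ⟨i, hi⟩

lemma eq_inv_card_of_forall_inv_card_le {ι : Type*} [Fintype ι] {w : ι → ℝ} (hw : ∑ i, w i = 1)
    (h : ∀ i, (Fintype.card ι : ℝ)⁻¹ ≤ w i → w i = (Fintype.card ι : ℝ)⁻¹) (i : ι) :
    w i = (Fintype.card ι : ℝ)⁻¹ := by
  have : Nonempty ι := ⟨i⟩
  have hle : ∀ j ∈ Finset.univ, w j ≤ (Fintype.card ι : ℝ)⁻¹ := fun j _ =>
    (le_or_gt (Fintype.card ι : ℝ)⁻¹ (w j)).elim (fun hj => (h j hj).le) le_of_lt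
  have hcard : (Fintype.card ι : ℝ) ≠ 0 := Nat.cast_ne_zero.2 Fintype.card_ne_zero
  refine (Finset.sum_eq_sum_iff_of_le hle).1 ?_ i (Finset.mem_univ i)
  simp [hw, hcard]

lemma Fin.sum_eq_add_mul_of_forall_ne {M : Type*} [NonAssocSemiring M] {d : ℕ}
    (φ : Fin (d + 1) → M) (k : Fin (d + 1)) {c : M} (h : ∀ j ≠ k, φ j = c) :
    ∑ i, φ i = φ k + d * c := by
  rw [← Finset.add_sum_erase _ _ (Finset.mem_univ k),
    Finset.sum_congr rfl fun i hi => h i (Finset.ne_of_mem_erase hi), Finset.sum_const,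
    Finset.card_erase_of_mem (Finset.mem_univ k), Finset.card_univ, Fintype.card_fin,
    Nat.add_sub_cancel, nsmul_eq_mul]

lemma two_add_two_div_mem_Ioc {d : ℕ} (hd : 1 ≤ d) : 2 + 2 / (d : ℝ) ∈ Ioc 2 4 := by
  have hd' : (1 : ℝ) ≤ d := by exact_mod_cast hd
  constructor
  · have : 0 < 2 / (d : ℝ) := by positivity
    linarith
  · have : 2 / (d : ℝ) ≤ 2 := div_le_self zero_le_two hd'
    linarith

variable {E : Type*} [NormedAddCommGroup E] [InnerProductSpace ℝ E]

lemma norm_sub_sq_eq_two_sub_inner {x y : E} (hx : ‖x‖ = 1) (hy : ‖y‖ = 1) :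
    ‖x - y‖ ^ 2 = 2 - 2 * ⟪x, y⟫ := by
  rw [norm_sub_sq_real, hx, hy]
  ring

lemma sq_norm_sub_mem_Icc {x y : E} (hx : ‖x‖ = 1) (hy : ‖y‖ = 1) : ‖x - y‖ ^ 2 ∈ Icc 0 4 := by
  have := abs_le.1 ((abs_real_inner_le_norm x y).trans_eq (by rw [hx, hy, one_mul]))
  rw [norm_sub_sq_eq_two_sub_inner hx hy]
  constructor <;> linarith [this.1, this.2]

lemma exists_norm_eq_one_forall_ne (hE : 1 < Module.rank ℝ E) {ι : Type*} [Finite ι]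
    (v : ι → E) : ∃ y : E, ‖y‖ = 1 ∧ ∀ i, y ≠ v i := by
  have : Nontrivial E := rank_pos_iff_nontrivial.1 (zero_lt_one.trans hE)
  obtain ⟨x, hx⟩ := (NormedSpace.sphere_nonempty (x := (0 : E))).2 zero_le_one
  have hnt : (Metric.sphere (0 : E) 1).Nontrivial := by
    refine ⟨x, hx, -x, by simpa using hx, fun h => ?_⟩
    rw [eq_neg_iff_add_eq_zero, ← two_smul ℝ, smul_eq_zero] at h
    simp_all
  have hinf := (isConnected_sphere hE 0 zero_le_one).isPreconnected.infinite_of_nontrivial hnt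
  obtain ⟨y, hy, hyv⟩ := (hinf.sdiff (finite_range v)).nonempty
  exact ⟨y, by simpa using hy, fun i h => hyv ⟨i, h.symm⟩⟩

lemma iInf_sphere_sum_le {ι : Type*} [Fintype ι] {v : ι → E} (hv : ∀ i, ‖v i‖ = 1)
    {f : ℝ → EReal} (hf : ∀ t ∈ Icc 0 4, f t ≠ ⊤ ∧ f t ≠ ⊥) {u : E} (hu : ‖u‖ = 1) :
    ⨅ y : Metric.sphere (0 : E) 1, ∑ i, f (‖(y : E) - v i‖ ^ 2) ≤
      ((∑ i, (f (‖u - v i‖ ^ 2)).toReal : ℝ) : EReal) :=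
  (iInf_sphere_le (fun y => ∑ i, f (‖y - v i‖ ^ 2)) hu).trans_eq
    (EReal.sum_eq_coe_sum_toReal fun i _ => hf _ (sq_norm_sub_mem_Icc hu (hv i)))

lemma iInf_sphere_sum_lt_top (hE : 1 < Module.rank ℝ E) {ι : Type*} [Fintype ι]
    {v : ι → E} (hv : ∀ i, ‖v i‖ = 1) {f : ℝ → EReal} (hne_bot : ∀ t ∈ Icc 0 4, f t ≠ ⊥)
    (hfin : ∀ t ∈ Ioc 0 4, f t ≠ ⊤) :
    ⨅ y : Metric.sphere (0 : E) 1, ∑ i, f (‖(y : E) - v i‖ ^ 2) < ⊤ := by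
  obtain ⟨y, hy, hyv⟩ := exists_norm_eq_one_forall_ne hE v
  refine (iInf_sphere_le (fun y => ∑ i, f (‖y - v i‖ ^ 2)) hy).trans_lt ?_
  rw [EReal.sum_eq_coe_sum_toReal fun i _ => ?_]
  · exact EReal.coe_lt_top _
  have hi := sq_norm_sub_mem_Icc hy (hv i)
  exact ⟨hfin _ ⟨pow_pos (norm_pos_iff.2 (sub_ne_zero.2 (hyv i))) 2, hi.2⟩, hne_bot _ hi⟩

lemma exists_norm_eq_one_inner_eq_neg [FiniteDimensional ℝ E] {ι : Type*} (v : ι → E)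
    {s : Finset ι} (hs : s.Nonempty) (hcard : s.card ≤ finrank ℝ E) :
    ∃ u : E, ‖u‖ = 1 ∧ ∃ h, 0 ≤ h ∧ ∀ j ∈ s, ⟪u, v j⟫ = -h := by
  classical
  obtain ⟨j₀, hj₀⟩ := hs
  set V := vectorSpan ℝ (s.image v : Set E)
  have hV : V ≠ ⊤ := by
    intro hV
    have hpos := Finset.card_pos.2 ⟨j₀, hj₀⟩
    have : finrank ℝ V ≤ s.card - 1 := finrank_vectorSpan_image_finset_le ℝ v s (by omega)
    rw [hV, finrank_top] at this
    omega
  obtain ⟨u₀, hu₀V, hu₀⟩ := (Submodule.ne_bot_iff _).1 (mt Submodule.orthogonal_eq_bot_iff.1 hV)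
  set u := ‖u₀‖⁻¹ • u₀
  have hu : ‖u‖ = 1 := norm_smul_inv_norm hu₀
  have hconst : ∀ j ∈ s, ⟪u, v j⟫ = ⟪u, v j₀⟫ := fun j hj => by
    have hmem : v j - v j₀ ∈ V :=
      vsub_mem_vectorSpan ℝ (Finset.mem_image_of_mem v hj) (Finset.mem_image_of_mem v hj₀)
    have := Submodule.inner_right_of_mem_orthogonal hmem (Submodule.smul_mem _ ‖u₀‖⁻¹ hu₀V)
    rw [real_inner_comm, inner_sub_right, sub_eq_zero] at this
    exact this
  rcases le_total ⟪u, v j₀⟫ 0 with hneg | hpos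
  · exact ⟨u, hu, -⟪u, v j₀⟫, by linarith, fun j hj => by rw [hconst j hj, neg_neg]⟩
  · exact ⟨-u, by rw [norm_neg, hu], ⟪u, v j₀⟫, hpos, fun j hj => by
      rw [inner_neg_left, hconst j hj]⟩

lemma mul_inner_eq_of_sum_smul_eq_zero {ι : Type*} [Fintype ι] [DecidableEq ι] {v : ι → E}
    {w : ι → ℝ} (hw : ∑ i, w i = 1) (hwv : ∑ i, w i • v i = 0) {u : E} {k : ι} {h : ℝ}
    (hu : ∀ j ≠ k, ⟪u, v j⟫ = -h) : w k * ⟪u, v k⟫ = (1 - w k) * h := by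
  have h0 : ∑ i, w i * ⟪u, v i⟫ = 0 := by
    simp_rw [← real_inner_smul_right, ← inner_sum, hwv, inner_zero_right]
  have hrest : ∑ i ∈ Finset.univ.erase k, w i * ⟪u, v i⟫ = -(1 - w k) * h := by
    rw [Finset.sum_congr rfl fun i hi => by rw [hu i (Finset.ne_of_mem_erase hi)],
      ← Finset.sum_mul, Finset.sum_erase_eq_sub (Finset.mem_univ k), hw]
    ring
  rw [← Finset.add_sum_erase _ _ (Finset.mem_univ k), hrest] at h0
  linarith

section Simplex

variable [FiniteDimensional ℝ E] {d : ℕ} {v : Fin (d + 1) → E} {w : Fin (d + 1) → ℝ}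
  {G : ℝ → ℝ}

lemma exists_norm_eq_one_sq_norm_sub_eq (hd : 1 ≤ d) (hE : finrank ℝ E = d)
    (hv : ∀ i, ‖v i‖ = 1) (hw : w ∈ stdSimplex ℝ (Fin (d + 1))) (hwv : ∑ i, w i • v i = 0)
    {k : Fin (d + 1)} (hk : ((d : ℝ) + 1)⁻¹ ≤ w k) :
    ∃ u : E, ‖u‖ = 1 ∧ ∃ α β : ℝ, ‖u - v k‖ ^ 2 = α ∧ (∀ j ≠ k, ‖u - v j‖ ^ 2 = β) ∧
      α ∈ Icc 0 2 ∧ β ∈ Icc 2 4 ∧ d * (2 + 2 / d) ≤ α + d * β ∧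
      (α = 0 → β = 2 + 2 / d → (∀ j ≠ k, ⟪v k, v j⟫ = -1 / d) ∧ w k = ((d : ℝ) + 1)⁻¹) := by
  have : Nontrivial (Fin (d + 1)) := Fin.nontrivial_iff_two_le.2 (by omega)
  obtain ⟨j, hj⟩ := exists_ne k
  obtain ⟨u, hu, h, hh0, hinner⟩ := exists_norm_eq_one_inner_eq_neg v
    (s := Finset.univ.erase k) ⟨j, Finset.mem_erase.2 ⟨hj, Finset.mem_univ j⟩⟩ (by simp [hE])
  replace hinner : ∀ j ≠ k, ⟪u, v j⟫ = -h := fun j hj => hinner j (by simp [hj])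
  have hbal := mul_inner_eq_of_sum_smul_eq_zero hw.2 hwv hinner
  have hh1 : h ≤ 1 := by
    have := neg_le_of_abs_le (abs_real_inner_le_norm u (v j))
    rw [hu, hv j, hinner j hj] at this
    linarith
  have hg1 : ⟪u, v k⟫ ≤ 1 := by simpa [hu, hv k] using real_inner_le_norm u (v k)
  have hwk1 : w k ≤ 1 := (mem_Icc_of_mem_stdSimplex hw k).2
  have hwk0 : 0 < w k := lt_of_lt_of_le (by positivity) hk
  have hk' : 1 ≤ (d + 1) * w k := by
    rw [inv_le_iff_one_le_mul₀ (by positivity)] at hk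
    linarith
  -- both from the balance `hbal` together with `w k ≥ 1/(d+1)`
  have hg0 : 0 ≤ ⟪u, v k⟫ := by nlinarith
  have hgh : ⟪u, v k⟫ ≤ d * h := by nlinarith
  refine ⟨u, hu, 2 - 2 * ⟪u, v k⟫, 2 + 2 * h, norm_sub_sq_eq_two_sub_inner hu (hv k),
    fun j hj => by rw [norm_sub_sq_eq_two_sub_inner hu (hv j), hinner j hj]; ring,
    ⟨by linarith, by linarith⟩, ⟨by linarith, by linarith⟩, ?_, fun hα hβ => ?_⟩
  · rw [mul_add, mul_div_cancel₀ _ (by positivity)]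
    nlinarith
  · have huk : u = v k := by
      rw [← sub_eq_zero, ← norm_eq_zero, ← pow_eq_zero_iff two_ne_zero,
        norm_sub_sq_eq_two_sub_inner hu (hv k), hα]
    have hh : h = 1 / d := by linear_combination hβ / 2
    subst huk
    refine ⟨fun j hj => by rw [hinner j hj, hh, neg_div], ?_⟩
    rw [show ⟪v k, v k⟫ = 1 by linarith, hh] at hbal
    field_simp at hbal ⊢
    linarith

lemma exists_norm_eq_one_sum_le (hG : ConvexOn ℝ (Icc 0 4) G) (hanti : AntitoneOn G (Icc 0 4))
    (hd : 1 ≤ d) (hE : finrank ℝ E = d) (hv : ∀ i, ‖v i‖ = 1)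
    (hw : w ∈ stdSimplex ℝ (Fin (d + 1))) (hwv : ∑ i, w i • v i = 0) :
    ∃ u : E, ‖u‖ = 1 ∧ ∑ i, G (‖u - v i‖ ^ 2) ≤ G 0 + d * G (2 + 2 / d) := by
  obtain ⟨k, hk⟩ : ∃ k, ((d : ℝ) + 1)⁻¹ ≤ w k := by simpa using exists_inv_card_le hw.2
  obtain ⟨u, hu, α, β, hα, hβ, hαI, hβI, hsum, -⟩ :=
    exists_norm_eq_one_sq_norm_sub_eq hd hE hv hw hwv hk
  have hτ := two_add_two_div_mem_Ioc hd
  refine ⟨u, hu, ?_⟩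
  rw [Fin.sum_eq_add_mul_of_forall_ne _ k fun j hj => by rw [hβ j hj], hα]
  exact hG.add_mul_le_add_mul hanti ⟨by linarith [hτ.1], hτ.2⟩ ⟨hαI.1, by linarith [hαI.2, hτ.1]⟩
    ⟨by linarith [hβI.1], hβI.2⟩ d.cast_nonneg hsum

lemma exists_norm_eq_one_sum_lt (hG : StrictConvexOn ℝ (Icc 0 4) G)
    (hanti : AntitoneOn G (Icc 0 4)) (hd : 1 ≤ d) (hE : finrank ℝ E = d) (hv : ∀ i, ‖v i‖ = 1)
    (hw : w ∈ stdSimplex ℝ (Fin (d + 1))) (hwv : ∑ i, w i • v i = 0)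
    (hreg : ¬ ∀ i j, i ≠ j → ⟪v i, v j⟫ = -1 / d) :
    ∃ u : E, ‖u‖ = 1 ∧ ∑ i, G (‖u - v i‖ ^ 2) < G 0 + d * G (2 + 2 / d) := by
  by_contra! hnone
  have hτ := two_add_two_div_mem_Ioc hd
  have hrow : ∀ k, ((d : ℝ) + 1)⁻¹ ≤ w k →
      (∀ j ≠ k, ⟪v k, v j⟫ = -1 / d) ∧ w k = ((d : ℝ) + 1)⁻¹ := by
    intro k hk
    obtain ⟨u, hu, α, β, hα, hβ, hαI, hβI, hsum, heq⟩ :=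
      exists_norm_eq_one_sq_norm_sub_eq hd hE hv hw hwv hk
    by_contra hne
    refine (hnone u hu).not_gt ?_
    rw [Fin.sum_eq_add_mul_of_forall_ne _ k fun j hj => by rw [hβ j hj], hα]
    refine hG.add_mul_lt_add_mul hanti ⟨by linarith [hτ.1], hτ.2⟩
      ⟨hαI.1, by linarith [hαI.2, hτ.1]⟩ ⟨by linarith [hβI.1], hβI.2⟩
      (by exact_mod_cast hd) hsum ?_
    by_contra! h
    exact hne (heq h.1 h.2)
  have hall : ∀ k, w k = ((d : ℝ) + 1)⁻¹ := by
    simpa using eq_inv_card_of_forall_inv_card_le hw.2 (by simpa using fun k hk => (hrow k hk).2)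
  exact hreg fun i j hij => (hrow i (hall i).ge).1 j hij.symm

end Simplex

theorem stmt_16_general (d : ℕ) (hd : 2 ≤ d) (f : ℝ → EReal)
    (hne_bot : ∀ t ∈ Set.Icc (0:ℝ) 4, f t ≠ ⊥)
    (hfin : ∀ t ∈ Set.Ioc (0:ℝ) 4, f t ≠ ⊤)
    (hanti : AntitoneOn f (Set.Ioc (0:ℝ) 4))
    (hconv : ConvexOn ℝ (Set.Ioc (0:ℝ) 4) (fun t => (f t).toReal))
    (hlim : Filter.Tendsto f (nhdsWithin 0 (Set.Ioi 0)) (nhds (f 0)))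
    (v : Fin (d+1) → EuclideanSpace ℝ (Fin d))
    (hvnorm : ∀ i, ‖v i‖ = 1)
    (hint : (0 : EuclideanSpace ℝ (Fin d)) ∈ interior (convexHull ℝ (Set.range v))) :
    (⨅ y : Metric.sphere (0 : EuclideanSpace ℝ (Fin d)) 1,
        ∑ i, f (‖(y : EuclideanSpace ℝ (Fin d)) - v i‖^2)) ≤
      f 0 + ((d:ℝ) : EReal) * f (2 + 2/(d:ℝ)) ∧
    (StrictConvexOn ℝ (Set.Ioc (0:ℝ) 4) (fun t => (f t).toReal) →
      ¬ (∀ i j, i ≠ j → (inner ℝ (v i) (v j) : ℝ) = -1/(d:ℝ)) →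
      (⨅ y : Metric.sphere (0 : EuclideanSpace ℝ (Fin d)) 1,
          ∑ i, f (‖(y : EuclideanSpace ℝ (Fin d)) - v i‖^2)) <
        f 0 + ((d:ℝ) : EReal) * f (2 + 2/(d:ℝ))) := by
  have hE : finrank ℝ (EuclideanSpace ℝ (Fin d)) = d := finrank_euclideanSpace_fin
  have hτ : 2 + 2 / (d : ℝ) ∈ Ioc 0 4 :=
    Ioc_subset_Ioc_left zero_le_two (two_add_two_div_mem_Ioc (by omega))
  by_cases hf0 : f 0 = ⊤
  · rw [hf0, ← EReal.coe_toReal (hfin _ hτ) (hne_bot _ (Ioc_subset_Icc_self hτ)), ← EReal.coe_mul,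
      EReal.top_add_coe]
    exact ⟨le_top, fun _ _ => iInf_sphere_sum_lt_top
      (by rw [← finrank_eq_rank, hE]; exact_mod_cast hd) hvnorm hne_bot hfin⟩
  set G := fun t => (f t).toReal
  have hfin' : ∀ t ∈ Icc (0 : ℝ) 4, f t ≠ ⊤ ∧ f t ≠ ⊥ := fun t ht =>
    ⟨ht.1.eq_or_lt.elim (fun h => h ▸ hf0) fun h => hfin t ⟨h, ht.2⟩, hne_bot t ht⟩
  have hGlim : Tendsto G (𝓝[>] 0) (𝓝 (G 0)) :=
    (EReal.tendsto_toReal hf0 (hne_bot 0 (left_mem_Icc.2 zero_le_four))).comp hlim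
  have hGanti : AntitoneOn G (Icc 0 4) := fun x hx y hy hxy =>
    EReal.toReal_le_toReal (hanti.Icc_of_tendsto_nhdsGT hlim hx hy hxy) (hfin' y hy).2
      (hfin' x hx).1
  obtain ⟨w, hw, hwv⟩ := exists_mem_stdSimplex_of_mem_convexHull_range (interior_subset hint)
  rw [← EReal.coe_toReal hf0 (hne_bot 0 (left_mem_Icc.2 zero_le_four)),
    ← EReal.coe_toReal (hfin _ hτ) (hne_bot _ (Ioc_subset_Icc_self hτ)), ← EReal.coe_mul,
    ← EReal.coe_add]
  refine ⟨?_, fun hsc hreg => ?_⟩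
  · obtain ⟨u, hu, hle⟩ := exists_norm_eq_one_sum_le (hconv.Icc_of_tendsto_nhdsGT hGlim) hGanti
      (by omega) hE hvnorm hw hwv
    exact (iInf_sphere_sum_le hvnorm hfin' hu).trans (by exact_mod_cast hle)
  · obtain ⟨u, hu, hlt⟩ := exists_norm_eq_one_sum_lt (hsc.Icc_of_tendsto_nhdsGT hGlim) hGanti
      (by omega) hE hvnorm hw hwv hreg
    exact (iInf_sphere_sum_le hvnorm hfin' hu).trans_lt (by exact_mod_cast hlt)

theorem stmt_16 (d : ℕ) (hd : 2 ≤ d) (f : ℝ → EReal)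
    (hne_bot : ∀ t ∈ Set.Icc (0:ℝ) 4, f t ≠ ⊥)
    (hfin : ∀ t ∈ Set.Ioc (0:ℝ) 4, f t ≠ ⊤)
    (hanti : AntitoneOn f (Set.Ioc (0:ℝ) 4))
    (hconv : ConvexOn ℝ (Set.Ioc (0:ℝ) 4) (fun t => (f t).toReal))
    (hlim : Filter.Tendsto f (nhdsWithin 0 (Set.Ioi 0)) (nhds (f 0)))
    (v : Fin (d+1) → EuclideanSpace ℝ (Fin d))
    (hvnorm : ∀ i, ‖v i‖ = 1)
    (hai : AffineIndependent ℝ v)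
    (hint : (0 : EuclideanSpace ℝ (Fin d)) ∈ interior (convexHull ℝ (Set.range v))) :
    (⨅ y : Metric.sphere (0 : EuclideanSpace ℝ (Fin d)) 1,
        ∑ i, f (‖(y : EuclideanSpace ℝ (Fin d)) - v i‖^2)) ≤
      f 0 + ((d:ℝ) : EReal) * f (2 + 2/(d:ℝ)) ∧
    (StrictConvexOn ℝ (Set.Ioc (0:ℝ) 4) (fun t => (f t).toReal) →
      ¬ (∀ i j, i ≠ j → (inner ℝ (v i) (v j) : ℝ) = -1/(d:ℝ)) →
      (⨅ y : Metric.sphere (0 : EuclideanSpace ℝ (Fin d)) 1,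
          ∑ i, f (‖(y : EuclideanSpace ℝ (Fin d)) - v i‖^2)) <
        f 0 + ((d:ℝ) : EReal) * f (2 + 2/(d:ℝ))) :=
  stmt_16_general d hd f hne_bot hfin hanti hconv hlim v hvnorm hint
end

section
/- Let d ≥ 2 and σ > 0, and let ω* = {x_0,...,x_d} be the vertices of a regular d-simplex inscribed in S^{d-1}. Then for every x ∈ S^{d-1}, ∑_{i=0}^d exp(-σ|x - x_i|²) ≥ exp(-4σ) + d·exp(-σ(2 - 2/d)), with equality if and only if x ∈ {-x_0,...,-x_d}. -/
/-!
Put `u i = ⟪x i, y⟫`. Then `‖y - x i‖² = 2 - 2 u i` and `-1 ≤ u i`, and since the simplex is a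
tight frame, `∑ u i = 0` and `∑ u i² = (d + 1) / d`. The quadrature rule `p (-1) + d p (1/d)`
therefore integrates every quadratic `p` exactly against the points `u i`. Take for `p` the
quadratic interpolating `h t = exp (-σ (2 - 2 t))` at `-1` and `h, h'` at `1/d`: the gap in the
inequality becomes `∑ (h - p) (u i)`. Because `h'` is strictly convex, Rolle's theorem shows that
`h - p` is positive on `[-1, ∞)` except at its zeros `-1` and `1/d`, and the moment conditions
allow all `u i` to lie in `{-1, 1/d}` only if some `u k = -1`, that is `y = -x k`.
-/

open Real Finset Module
open scoped InnerProductSpace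

lemma strictConvexOn_const_mul_exp_affine {c k : ℝ} (hc : 0 < c) (hk : k ≠ 0) (m : ℝ) :
    StrictConvexOn ℝ Set.univ (fun t => c * exp (k * t + m)) := by
  refine ⟨convex_univ, fun s _ t _ hst a b ha hb hab => ?_⟩
  have hne : k * s + m ≠ k * t + m := by simpa [hk] using hst
  have := strictConvexOn_exp.2 (Set.mem_univ _) (Set.mem_univ _) hne ha hb hab
  simp only [smul_eq_mul] at this ⊢
  calc c * exp (k * (a * s + b * t) + m) = c * exp (a * (k * s + m) + b * (k * t + m)) := by
        congr 2; linear_combination m * hab.symm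
    _ < c * (a * exp (k * s + m) + b * exp (k * t + m)) := by gcongr
    _ = a * (c * exp (k * s + m)) + b * (c * exp (k * t + m)) := by ring

lemma StrictConvexOn.add_affine {f : ℝ → ℝ} {s : Set ℝ} (hf : StrictConvexOn ℝ s f) (k m : ℝ) :
    StrictConvexOn ℝ s (fun t => f t + (k * t + m)) :=
  hf.add_convexOn ((LinearMap.convexOn (k • LinearMap.id) hf.1).add_const m)

lemma StrictConvexOn.neg_of_mem_Ioo {f : ℝ → ℝ} (hf : StrictConvexOn ℝ Set.univ f) {c a t : ℝ}
    (hc : f c = 0) (ha : f a = 0) (ht : t ∈ Set.Ioo c a) : f t < 0 := by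
  have := hf.slope_strict_mono_adjacent (Set.mem_univ c) (Set.mem_univ a) ht.1 ht.2
  rw [hc, ha, sub_zero, zero_sub, neg_div] at this
  by_contra! h
  have : 0 ≤ f t / (t - c) := div_nonneg h (sub_pos.2 ht.1).le
  have : 0 ≤ f t / (a - t) := div_nonneg h (sub_pos.2 ht.2).le
  linarith

lemma StrictConvexOn.pos_of_notMem_Icc {f : ℝ → ℝ} (hf : StrictConvexOn ℝ Set.univ f) {c a t : ℝ}
    (hc : f c = 0) (ha : f a = 0) (hca : c < a) (ht : t ∉ Set.Icc c a) : 0 < f t := by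
  rcases not_and_or.1 ht with htc | hat
  · have htc := lt_of_not_ge htc
    have := hf.slope_strict_mono_adjacent (Set.mem_univ t) (Set.mem_univ a) htc hca
    rw [hc, ha, sub_self, zero_div, zero_sub, neg_div, neg_neg_iff_pos] at this
    exact (div_pos_iff_of_pos_right (sub_pos.2 htc)).1 this
  · have hat := lt_of_not_ge hat
    have := hf.slope_strict_mono_adjacent (Set.mem_univ c) (Set.mem_univ t) hca hat
    rw [hc, ha, sub_self, zero_div, sub_zero] at this
    exact (div_pos_iff_of_pos_right (sub_pos.2 hat)).1 this

lemma lt_of_hasDerivAt_of_pos {g g' : ℝ → ℝ} (hg : ∀ t, HasDerivAt g (g' t) t) {p q : ℝ}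
    (hpq : p < q) (hpos : ∀ t ∈ Set.Ioo p q, 0 < g' t) : g p < g q := by
  obtain ⟨ξ, hξ, hslope⟩ := exists_hasDerivAt_eq_slope g g' hpq
    (fun t _ => (hg t).continuousAt.continuousWithinAt) (fun t _ => hg t)
  have := hslope ▸ hpos ξ hξ
  exact sub_pos.1 ((div_pos_iff_of_pos_right (sub_pos.2 hpq)).1 this)

lemma pos_of_hasDerivAt_of_strictConvexOn {g g' : ℝ → ℝ} (hg : ∀ t, HasDerivAt g (g' t) t)
    (hg' : StrictConvexOn ℝ Set.univ g') {b a t : ℝ} (hba : b < a) (hb : g b = 0) (ha : g a = 0)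
    (ha' : g' a = 0) (hbt : b < t) (hta : t ≠ a) : 0 < g t := by
  -- `g'` vanishes at `a` and, by Rolle, at some `c ∈ (b, a)`; strict convexity fixes its sign.
  obtain ⟨c, hc, hc'⟩ := exists_hasDerivAt_eq_zero hba
    (fun t _ => (hg t).continuousAt.continuousWithinAt) (hb.trans ha.symm) (fun t _ => hg t)
  have hca := hc.2
  rcases le_or_gt t c with htc | hct
  · rw [← hb]
    exact lt_of_hasDerivAt_of_pos hg hbt fun s hs =>
      hg'.pos_of_notMem_Icc hc' ha' hca fun h => (hs.2.trans_le htc).not_ge h.1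
  rcases lt_or_gt_of_ne hta with hta | hat
  · rw [← ha, ← neg_lt_neg_iff]
    exact lt_of_hasDerivAt_of_pos (fun s => (hg s).neg) hta fun s hs =>
      neg_pos.2 (hg'.neg_of_mem_Ioo hc' ha' ⟨hct.trans hs.1, hs.2⟩)
  · rw [← ha]
    exact lt_of_hasDerivAt_of_pos hg hat fun s hs =>
      hg'.pos_of_notMem_Icc hc' ha' hca fun h => hs.1.not_ge h.2

/-- `h` minus the quadratic that agrees with `h` at `b` and with `h` and `h'` at `a`. -/
noncomputable def hermiteRemainder (h h' : ℝ → ℝ) (b a t : ℝ) : ℝ :=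
  h t - (h a + h' a * (t - a) + (h b - h a - h' a * (b - a)) / (b - a) ^ 2 * (t - a) ^ 2)

section HermiteRemainder

variable {h h' : ℝ → ℝ} {b a : ℝ}

lemma hermiteRemainder_left (hba : b ≠ a) : hermiteRemainder h h' b a b = 0 := by
  have : b - a ≠ 0 := sub_ne_zero.2 hba
  unfold hermiteRemainder
  field_simp
  ring

lemma hermiteRemainder_right : hermiteRemainder h h' b a a = 0 := by
  simp [hermiteRemainder]

lemma hermiteRemainder_pos (hh : ∀ t, HasDerivAt h (h' t) t)
    (hconv : StrictConvexOn ℝ Set.univ h') (hba : b < a) {t : ℝ} (hbt : b < t) (hta : t ≠ a) :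
    0 < hermiteRemainder h h' b a t := by
  set q := (h b - h a - h' a * (b - a)) / (b - a) ^ 2
  refine pos_of_hasDerivAt_of_strictConvexOn
    (g' := fun t => h' t + (-2 * q * t + (2 * q * a - h' a)))
    (fun t => ?_) (hconv.add_affine _ _) hba (hermiteRemainder_left hba.ne) hermiteRemainder_right
    (by ring) hbt hta
  have hp : HasDerivAt (fun t => h a + h' a * (t - a) + q * (t - a) ^ 2)
      (h' a * 1 + q * (2 * (t - a) ^ 1 * 1)) t :=
    ((((hasDerivAt_id t).sub_const a).const_mul _).const_add _).add
      ((((hasDerivAt_id t).sub_const a).pow 2).const_mul _)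
  exact ((hh t).sub hp).congr_deriv (by ring)

lemma hermiteRemainder_nonneg (hh : ∀ t, HasDerivAt h (h' t) t)
    (hconv : StrictConvexOn ℝ Set.univ h') (hba : b < a) {t : ℝ} (hbt : b ≤ t) :
    0 ≤ hermiteRemainder h h' b a t := by
  rcases hbt.eq_or_lt with rfl | hbt
  · exact (hermiteRemainder_left hba.ne).ge
  rcases eq_or_ne t a with rfl | hta
  · exact hermiteRemainder_right.ge
  exact (hermiteRemainder_pos hh hconv hba hbt hta).le

lemma hermiteRemainder_eq_zero_iff (hh : ∀ t, HasDerivAt h (h' t) t)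
    (hconv : StrictConvexOn ℝ Set.univ h') (hba : b < a) {t : ℝ} (hbt : b ≤ t) :
    hermiteRemainder h h' b a t = 0 ↔ t = b ∨ t = a := by
  refine ⟨fun h0 => ?_, ?_⟩
  · by_contra! hne
    exact (hermiteRemainder_pos hh hconv hba (hbt.lt_of_ne hne.1.symm) hne.2).ne' h0
  · rintro (rfl | rfl)
    exacts [hermiteRemainder_left hba.ne, hermiteRemainder_right]

end HermiteRemainder

section Moments

variable {n : ℕ} {u : Fin (n + 1) → ℝ}

lemma sum_quadratic_eq_of_moments (hn : n ≠ 0) (hsum : ∑ i, u i = 0)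
    (hsq : ∑ i, u i ^ 2 = (n + 1) / n) {p : ℝ → ℝ} {α β γ c : ℝ}
    (hp : ∀ t, p t = α + β * (t - c) + γ * (t - c) ^ 2) :
    ∑ i, p (u i) = p (-1) + n * p (n : ℝ)⁻¹ := by
  have hp' : ∀ t, p t = (α - β * c + γ * c ^ 2) + (β - 2 * γ * c) * t + γ * t ^ 2 := fun t => by
    rw [hp]; ring
  simp only [hp', sum_add_distrib, ← mul_sum, sum_const, card_univ, Fintype.card_fin, hsum, hsq,
    nsmul_eq_mul]
  field_simp
  push_cast
  ring

lemma forall_eq_neg_one_or_eq_inv_iff_exists (hn : n ≠ 0) (hsum : ∑ i, u i = 0)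
    (hsq : ∑ i, u i ^ 2 = (n + 1) / n) :
    (∀ i, u i = -1 ∨ u i = (n : ℝ)⁻¹) ↔ ∃ k, u k = -1 := by
  have hn' : (n : ℝ) ≠ 0 := Nat.cast_ne_zero.2 hn
  constructor
  · intro hu
    by_contra! hne
    have hall : ∀ i, u i = (n : ℝ)⁻¹ := fun i => (hu i).resolve_left (hne i)
    simp only [hall, sum_const, card_univ, Fintype.card_fin, nsmul_eq_mul] at hsum
    field_simp at hsum
    norm_cast at hsum
  · rintro ⟨k, hk⟩ i
    refine or_iff_not_imp_left.2 fun hik => ?_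
    have hvar : ∑ i, (u i - (n : ℝ)⁻¹) ^ 2 = (u k - (n : ℝ)⁻¹) ^ 2 := by
      simp only [sub_sq, sum_add_distrib, sum_sub_distrib, ← sum_mul, ← mul_sum, hsum, hsq, hk,
        sum_const, card_univ, Fintype.card_fin, nsmul_eq_mul]
      field_simp
      push_cast
      ring
    rw [← add_sum_erase _ _ (mem_univ k), add_eq_left,
      sum_eq_zero_iff_of_nonneg fun _ _ => sq_nonneg _] at hvar
    have := hvar i (mem_erase.2 ⟨fun h => hik (h ▸ hk), mem_univ i⟩)
    rwa [sq_eq_zero_iff, sub_eq_zero] at this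

theorem le_sum_and_eq_iff_of_moments (hn : n ≠ 0) {h h' : ℝ → ℝ}
    (hh : ∀ t, HasDerivAt h (h' t) t) (hconv : StrictConvexOn ℝ Set.univ h')
    (hu : ∀ i, -1 ≤ u i) (hsum : ∑ i, u i = 0) (hsq : ∑ i, u i ^ 2 = (n + 1) / n) :
    h (-1) + n * h (n : ℝ)⁻¹ ≤ ∑ i, h (u i) ∧
      (∑ i, h (u i) = h (-1) + n * h (n : ℝ)⁻¹ ↔ ∃ k, u k = -1) := by
  set R := hermiteRemainder h h' (-1) (n : ℝ)⁻¹
  have hba : (-1 : ℝ) < (n : ℝ)⁻¹ := neg_one_lt_zero.trans_le (by positivity)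
  have hRnonneg : ∀ i, 0 ≤ R (u i) := fun i => hermiteRemainder_nonneg hh hconv hba (hu i)
  have hgap : ∑ i, h (u i) - (h (-1) + n * h (n : ℝ)⁻¹) = ∑ i, R (u i) := by
    have := sum_quadratic_eq_of_moments hn hsum hsq (p := fun t => h t - R t)
      fun t => sub_sub_cancel (h t) _
    simp only [R, hermiteRemainder_left hba.ne, hermiteRemainder_right, sub_zero,
      sum_sub_distrib] at this
    linarith
  refine ⟨sub_nonneg.1 (hgap ▸ sum_nonneg fun i _ => hRnonneg i), ?_⟩
  rw [← sub_eq_zero, hgap, sum_eq_zero_iff_of_nonneg fun i _ => hRnonneg i,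
    ← forall_eq_neg_one_or_eq_inv_iff_exists hn hsum hsq]
  simp only [mem_univ, true_implies, R, hermiteRemainder_eq_zero_iff hh hconv hba (hu _)]

end Moments

section Equiangular

variable {E : Type*} [NormedAddCommGroup E] [InnerProductSpace ℝ E] {ι : Type*} [DecidableEq ι]
  {v : ι → E} {c : ℝ}

lemma inner_eq_ite_of_equiangular (hnorm : ∀ i, ‖v i‖ = 1)
    (hinner : ∀ i j, i ≠ j → ⟪v i, v j⟫_ℝ = c) (i j : ι) :
    ⟪v i, v j⟫_ℝ = c + if i = j then 1 - c else 0 := by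
  split_ifs with hij
  · rw [hij, real_inner_self_eq_norm_sq, hnorm, one_pow, add_sub_cancel]
  · rw [hinner i j hij, add_zero]

variable [Fintype ι]

lemma sum_mul_inner_of_equiangular (hnorm : ∀ i, ‖v i‖ = 1)
    (hinner : ∀ i j, i ≠ j → ⟪v i, v j⟫_ℝ = c) (g : ι → ℝ) (j : ι) :
    ∑ i, g i * ⟪v j, v i⟫_ℝ = c * ∑ i, g i + (1 - c) * g j := by
  simp only [inner_eq_ite_of_equiangular hnorm hinner, mul_add, mul_ite, mul_zero,
    sum_add_distrib, sum_ite_eq, mem_univ, if_true, ← sum_mul]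
  ring

lemma sum_inner_smul_of_equiangular (hnorm : ∀ i, ‖v i‖ = 1)
    (hinner : ∀ i j, i ≠ j → ⟪v i, v j⟫_ℝ = c) (j : ι) :
    ∑ i, ⟪v i, v j⟫_ℝ • v i = c • ∑ i, v i + (1 - c) • v j := by
  simp only [inner_eq_ite_of_equiangular hnorm hinner, add_smul, ite_smul, zero_smul,
    sum_add_distrib, sum_ite_eq', mem_univ, if_true, ← smul_sum]

lemma linearIndependent_of_equiangular (hnorm : ∀ i, ‖v i‖ = 1)
    (hinner : ∀ i j, i ≠ j → ⟪v i, v j⟫_ℝ = c) (hc : c ≠ 1)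
    (hc' : 1 + (Fintype.card ι - 1) * c ≠ 0) : LinearIndependent ℝ v := by
  rw [Fintype.linearIndependent_iff]
  intro g hg
  have key : ∀ j, c * ∑ i, g i + (1 - c) * g j = 0 := fun j => by
    rw [← sum_mul_inner_of_equiangular hnorm hinner, ← inner_zero_right (v j), ← hg, inner_sum]
    simp only [real_inner_smul_right]
  have hS : ∑ i, g i = 0 := by
    have := sum_congr rfl fun j (_ : j ∈ univ) => key j
    rw [sum_add_distrib, sum_const, ← mul_sum, card_univ, nsmul_eq_mul, sum_const_zero] at this
    have : (1 + (Fintype.card ι - 1) * c) * ∑ i, g i = 0 := by linear_combination this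
    exact (mul_eq_zero.1 this).resolve_left hc'
  intro j
  simpa [hS, sub_ne_zero.2 hc.symm] using key j

end Equiangular

section RegularSimplex

variable {E : Type*} [NormedAddCommGroup E] [InnerProductSpace ℝ E] {n : ℕ} {x : Fin (n + 1) → E}

lemma sum_eq_zero_of_regularSimplex (hnorm : ∀ i, ‖x i‖ = 1)
    (hinner : ∀ i j, i ≠ j → ⟪x i, x j⟫_ℝ = -1 / n) (hn : n ≠ 0) : ∑ i, x i = 0 := by
  have hn' : (n : ℝ) ≠ 0 := Nat.cast_ne_zero.2 hn
  have horth : ∀ j, ⟪x j, ∑ i, x i⟫_ℝ = 0 := fun j => by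
    have := sum_mul_inner_of_equiangular hnorm hinner (fun _ => 1) j
    simp only [one_mul, sum_const, card_univ, Fintype.card_fin, nsmul_eq_mul, mul_one] at this
    rw [inner_sum, this]
    field_simp
    push_cast
    ring
  rw [← inner_self_eq_zero (𝕜 := ℝ), sum_inner]
  exact sum_eq_zero fun j _ => horth j

lemma span_range_eq_top_of_regularSimplex (hnorm : ∀ i, ‖x i‖ = 1)
    (hinner : ∀ i j, i ≠ j → ⟪x i, x j⟫_ℝ = -1 / n) (hn : n ≠ 0) (hE : finrank ℝ E = n) :
    Submodule.span ℝ (Set.range x) = ⊤ := by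
  have hn' : (n : ℝ) ≠ 0 := Nat.cast_ne_zero.2 hn
  have hli : LinearIndependent ℝ (fun i : Fin n => x i.succ) :=
    linearIndependent_of_equiangular (fun i => hnorm _)
      (fun i j hij => hinner _ _ (Fin.succ_injective n |>.ne hij))
      ((div_neg_of_neg_of_pos neg_one_lt_zero (by positivity)).trans_le zero_le_one).ne
      (by rw [Fintype.card_fin]; convert one_div_ne_zero hn' using 1; field_simp; ring)
  have : FiniteDimensional ℝ E := Module.finite_of_finrank_pos (hE ▸ Nat.pos_of_ne_zero hn)
  refine eq_top_mono (Submodule.span_mono ?_) (hli.span_eq_top_of_card_eq_finrank' ?_)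
  · exact Set.range_comp_subset_range _ _
  · simp [hE]

lemma sum_inner_smul_of_regularSimplex (hnorm : ∀ i, ‖x i‖ = 1)
    (hinner : ∀ i j, i ≠ j → ⟪x i, x j⟫_ℝ = -1 / n) (hn : n ≠ 0) (hE : finrank ℝ E = n) (y : E) :
    ∑ i, ⟪x i, y⟫_ℝ • x i = ((n + 1) / n : ℝ) • y := by
  have hn' : (n : ℝ) ≠ 0 := Nat.cast_ne_zero.2 hn
  let T : E →ₗ[ℝ] E := ∑ i, (innerₛₗ ℝ (x i)).smulRight (x i)
  have hT : T = ((n + 1) / n : ℝ) • LinearMap.id := by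
    refine LinearMap.ext_on_range (span_range_eq_top_of_regularSimplex hnorm hinner hn hE)
      fun j => ?_
    simp only [T, LinearMap.sum_apply, LinearMap.smulRight_apply, innerₛₗ_apply_apply,
      sum_inner_smul_of_equiangular hnorm hinner, sum_eq_zero_of_regularSimplex hnorm hinner hn,
      LinearMap.smul_apply, LinearMap.id_apply, smul_zero, zero_add]
    congr 1
    field_simp
    ring
  simpa [T] using LinearMap.congr_fun hT y

lemma sum_inner_sq_of_regularSimplex (hnorm : ∀ i, ‖x i‖ = 1)
    (hinner : ∀ i j, i ≠ j → ⟪x i, x j⟫_ℝ = -1 / n) (hn : n ≠ 0) (hE : finrank ℝ E = n) (y : E) :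
    ∑ i, ⟪x i, y⟫_ℝ ^ 2 = (n + 1) / n * ‖y‖ ^ 2 := by
  have := congr_arg (⟪·, y⟫_ℝ) (sum_inner_smul_of_regularSimplex hnorm hinner hn hE y)
  simpa only [sum_inner, real_inner_smul_left, real_inner_self_eq_norm_sq, sq] using this

end RegularSimplex

lemma hasDerivAt_exp_neg_mul_two_sub (σ t : ℝ) :
    HasDerivAt (fun t => exp (-(σ * (2 - 2 * t)))) (2 * σ * exp (-(σ * (2 - 2 * t)))) t := by
  have := ((((hasDerivAt_id' t).const_mul 2).const_sub 2).const_mul σ).neg.exp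
  exact this.congr_deriv (by simp only [Pi.neg_apply]; ring)

lemma strictConvexOn_mul_exp_neg_mul_two_sub {σ : ℝ} (hσ : 0 < σ) :
    StrictConvexOn ℝ Set.univ fun t => 2 * σ * exp (-(σ * (2 - 2 * t))) := by
  convert strictConvexOn_const_mul_exp_affine (c := 2 * σ) (k := 2 * σ) (by positivity)
    (by positivity) (-2 * σ) using 1
  funext t
  ring_nf

theorem stmt_19_general (d : ℕ) (σ : ℝ) (hσ : 0 < σ)
    (x : Fin (d+1) → EuclideanSpace ℝ (Fin d))
    (hnorm : ∀ i, ‖x i‖ = 1)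
    (hinner : ∀ i j, i ≠ j → (inner ℝ (x i) (x j) : ℝ) = -1/(d:ℝ))
    (y : EuclideanSpace ℝ (Fin d)) (hy : ‖y‖ = 1) :
    Real.exp (-(σ * 4)) + (d:ℝ) * Real.exp (-(σ * (2 - 2/(d:ℝ)))) ≤
      ∑ i, Real.exp (-(σ * ‖y - x i‖^2)) ∧
    (∑ i, Real.exp (-(σ * ‖y - x i‖^2)) =
        Real.exp (-(σ * 4)) + (d:ℝ) * Real.exp (-(σ * (2 - 2/(d:ℝ)))) ↔
      ∃ k, y = -(x k)) := by
  have hd : d ≠ 0 := by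
    rintro rfl
    simpa [Subsingleton.elim (x 0) 0] using hnorm 0
  have hdist : ∀ i, ‖y - x i‖ ^ 2 = 2 - 2 * ⟪x i, y⟫_ℝ := fun i => by
    rw [norm_sub_sq_real, hy, hnorm i, real_inner_comm]
    ring
  obtain ⟨hle, heq⟩ := le_sum_and_eq_iff_of_moments hd (hasDerivAt_exp_neg_mul_two_sub σ)
    (strictConvexOn_mul_exp_neg_mul_two_sub hσ)
    (fun i => neg_one_le_real_inner_of_norm_eq_one (hnorm i) hy)
    (by rw [← sum_inner, sum_eq_zero_of_regularSimplex hnorm hinner hd, inner_zero_left])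
    (by rw [sum_inner_sq_of_regularSimplex hnorm hinner hd finrank_euclideanSpace_fin, hy, one_pow,
      mul_one])
  have hends : exp (-(σ * (2 - 2 * -1))) + d * exp (-(σ * (2 - 2 * (d : ℝ)⁻¹))) =
      exp (-(σ * 4)) + d * exp (-(σ * (2 - 2 / d))) := by
    norm_num [div_eq_mul_inv]
  simp only [hdist, ← hends]
  refine ⟨hle, heq.trans (exists_congr fun k => ?_)⟩
  rw [inner_eq_neg_one_iff_of_norm_eq_one (hnorm k) hy, eq_comm, neg_eq_iff_eq_neg]

theorem stmt_19 (d : ℕ) (hd : 2 ≤ d) (σ : ℝ) (hσ : 0 < σ)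
    (x : Fin (d+1) → EuclideanSpace ℝ (Fin d))
    (hnorm : ∀ i, ‖x i‖ = 1)
    (hinner : ∀ i j, i ≠ j → (inner ℝ (x i) (x j) : ℝ) = -1/(d:ℝ))
    (y : EuclideanSpace ℝ (Fin d)) (hy : ‖y‖ = 1) :
    Real.exp (-(σ * 4)) + (d:ℝ) * Real.exp (-(σ * (2 - 2/(d:ℝ)))) ≤
      ∑ i, Real.exp (-(σ * ‖y - x i‖^2)) ∧
    (∑ i, Real.exp (-(σ * ‖y - x i‖^2)) =
        Real.exp (-(σ * 4)) + (d:ℝ) * Real.exp (-(σ * (2 - 2/(d:ℝ)))) ↔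
      ∃ k, y = -(x k)) :=
  stmt_19_general d σ hσ x hnorm hinner y hy
end
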